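/- arXiv:1410.5419 — 2 statements merged into one kernel-verified Lean document; each statement's English description precedes it below -/
import Mathlib

section
/- In the SVD-based KL truncation setup, if the reduced dimension d is chosen so that sqrt(Σ_{j=d+1}^{min(P,r)} σ_j²) ≤ ε · sqrt(Σ_{j=1}^{min(P,r)} σ_j²), then the truncated expansion y^d satisfies sqrt(∫_Ξ ‖y^p(ξ) − y^d(ξ)‖²_Γ μ dξ) ≤ ε · sqrt(∫_Ξ ‖y^p(ξ) − ŷ₀‖²_Γ μ dξ). -/
/-!
The vectors `υ j = Γ^{-1/2} υ̃ j` are `Γ`-orthonormal because `Γ^{1/2}` is symmetric, and the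
coefficients `θ j = θ̂ jᵀ ψ` are `L²(μ)`-orthonormal because `ψ` and the `θ̂ j` are. By Pythagoras
the `Γ`-weighted mean-square norm of `∑_{j ∈ S} σ j θ j υ j` is therefore `∑_{j ∈ S} σ j ^ 2`, so
the two sides of the claim are exactly the two sides of the singular-value tail criterion.
-/

open MeasureTheory Matrix

section GammaOrthonormal

variable {R n : Type*} [CommRing R] [Fintype n]

theorem Matrix.dotProduct_mul_self_mulVec_inv_mulVec [DecidableEq n] {A : Matrix n n R}
    (hsymm : A.IsSymm) (hunit : IsUnit A) (u v : n → R) :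
    A⁻¹ *ᵥ u ⬝ᵥ (A * A) *ᵥ (A⁻¹ *ᵥ v) = u ⬝ᵥ v := by
  have hdet := (isUnit_iff_isUnit_det A).mp hunit
  rw [mulVec_mulVec, mul_assoc, mul_nonsing_inv _ hdet, mul_one, dotProduct_mulVec,
    ← mulVec_transpose, hsymm.eq, mulVec_mulVec, mul_nonsing_inv _ hdet, one_mulVec]

variable {κ : Type*} [DecidableEq κ]

theorem Matrix.sum_smul_dotProduct_mulVec_sum_smul {Γ : Matrix n n R} {υ : κ → n → R}
    (hυ : ∀ j k, υ j ⬝ᵥ Γ *ᵥ υ k = if j = k then 1 else 0) (S : Finset κ) (c : κ → R) :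
    (∑ j ∈ S, c j • υ j) ⬝ᵥ Γ *ᵥ (∑ j ∈ S, c j • υ j) = ∑ j ∈ S, c j ^ 2 := by
  simp only [mulVec_sum, sum_dotProduct, dotProduct_sum, mulVec_smul, smul_dotProduct,
    dotProduct_smul, hυ, smul_eq_mul, mul_ite, mul_one, mul_zero, Finset.sum_ite_eq']
  exact Finset.sum_congr rfl fun j hj => by rw [if_pos hj, sq]

end GammaOrthonormal

section L2Orthonormal

variable {Ξ ι : Type*} [Fintype ι] [MeasurableSpace Ξ] {μ : Measure Ξ} {ψ : Ξ → ι → ℝ}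

theorem integrable_dotProduct_mul_dotProduct
    (hint : ∀ j k, Integrable (fun ξ => ψ ξ j * ψ ξ k) μ) (a b : ι → ℝ) :
    Integrable (fun ξ => (a ⬝ᵥ ψ ξ) * (b ⬝ᵥ ψ ξ)) μ := by
  simp only [dotProduct, Finset.sum_mul_sum]
  refine integrable_finsetSum _ fun j _ => integrable_finsetSum _ fun k _ => ?_
  simpa only [mul_mul_mul_comm] using (hint j k).const_mul (a j * b k)

theorem integral_dotProduct_mul_dotProduct [DecidableEq ι]
    (hint : ∀ j k, Integrable (fun ξ => ψ ξ j * ψ ξ k) μ)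
    (horth : ∀ j k, ∫ ξ, ψ ξ j * ψ ξ k ∂μ = if j = k then (1 : ℝ) else 0) (a b : ι → ℝ) :
    ∫ ξ, (a ⬝ᵥ ψ ξ) * (b ⬝ᵥ ψ ξ) ∂μ = a ⬝ᵥ b := by
  have hterm : ∀ j k, (fun ξ => a j * ψ ξ j * (b k * ψ ξ k)) =
      fun ξ => a j * b k * (ψ ξ j * ψ ξ k) := fun j k => funext fun ξ => by ring
  have hint' : ∀ j k, Integrable (fun ξ => a j * ψ ξ j * (b k * ψ ξ k)) μ := fun j k => by
    rw [hterm]; exact (hint j k).const_mul _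
  simp only [dotProduct, Finset.sum_mul_sum]
  rw [integral_finsetSum _ fun j _ => integrable_finsetSum _ fun k _ => hint' j k]
  refine Finset.sum_congr rfl fun j _ => ?_
  rw [integral_finsetSum _ fun k _ => hint' j k]
  simp [hterm, integral_const_mul, horth]

end L2Orthonormal

theorem integral_sum_smul_dotProduct_mulVec_sum_smul {Ξ κ r : Type*} [MeasurableSpace Ξ]
    [Fintype r] [DecidableEq κ] {μ : Measure Ξ} {Γ : Matrix r r ℝ} {υ : κ → r → ℝ}
    (hυ : ∀ j k, υ j ⬝ᵥ Γ *ᵥ υ k = if j = k then 1 else 0) {θ : κ → Ξ → ℝ}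
    (hθint : ∀ j, Integrable (fun ξ => θ j ξ * θ j ξ) μ)
    (hθnorm : ∀ j, ∫ ξ, θ j ξ * θ j ξ ∂μ = 1) (S : Finset κ) (σ : κ → ℝ) :
    ∫ ξ, (∑ j ∈ S, (σ j * θ j ξ) • υ j) ⬝ᵥ Γ *ᵥ (∑ j ∈ S, (σ j * θ j ξ) • υ j) ∂μ =
      ∑ j ∈ S, σ j ^ 2 := by
  simp only [sum_smul_dotProduct_mulVec_sum_smul hυ, mul_pow, sq (θ _ _)]
  rw [integral_finsetSum _ fun j _ => (hθint j).const_mul _]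
  simp [integral_const_mul, hθnorm]

theorem stmt_3_general {P r : ℕ} {Ξ : Type*} [MeasurableSpace Ξ]
    (μ : Measure Ξ)
    (ψ : Ξ → Fin P → ℝ)
    (hint : ∀ j k, Integrable (fun ξ => ψ ξ j * ψ ξ k) μ)
    (horth : ∀ j k, ∫ ξ, ψ ξ j * ψ ξ k ∂μ = if j = k then (1 : ℝ) else 0)
    (Γ Γhalf : Matrix (Fin r) (Fin r) ℝ)
    (hΓhalf : Γhalf.PosDef) (hsq : Γhalf * Γhalf = Γ)
    (σ : Fin (min P r) → ℝ)
    (tυ : Fin (min P r) → Fin r → ℝ)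
    (htυ : ∀ j k, dotProduct (tυ j) (tυ k) = if j = k then (1 : ℝ) else 0)
    (υ : Fin (min P r) → Fin r → ℝ) (hυ : ∀ j, υ j = Γhalf⁻¹.mulVec (tυ j))
    (θhat : Fin (min P r) → Fin P → ℝ)
    (hθhat : ∀ j k, dotProduct (θhat j) (θhat k) = if j = k then (1 : ℝ) else 0)
    (θ : Fin (min P r) → Ξ → ℝ) (hθ : ∀ j ξ, θ j ξ = dotProduct (θhat j) (ψ ξ))
    (yhat0 : Fin r → ℝ) (d : ℕ)
    (yp yd : Ξ → Fin r → ℝ)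
    (hyp : ∀ ξ i, yp ξ i = yhat0 i + ∑ j, σ j * υ j i * θ j ξ)
    (hyd : ∀ ξ i, yd ξ i =
      yhat0 i + ∑ j ∈ Finset.univ.filter (fun j : Fin (min P r) => (j : ℕ) < d),
        σ j * υ j i * θ j ξ)
    (ε : ℝ)
    (hcrit : Real.sqrt (∑ j ∈ Finset.univ.filter
        (fun j : Fin (min P r) => d ≤ (j : ℕ)), σ j ^ 2) ≤
      ε * Real.sqrt (∑ j, σ j ^ 2)) :
    Real.sqrt (∫ ξ, dotProduct (yp ξ - yd ξ) (Γ.mulVec (yp ξ - yd ξ)) ∂μ) ≤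
      ε * Real.sqrt (∫ ξ, dotProduct (yp ξ - yhat0) (Γ.mulVec (yp ξ - yhat0)) ∂μ) := by
  have hυorth : ∀ j k, υ j ⬝ᵥ Γ *ᵥ υ k = if j = k then 1 else 0 := fun j k => by
    rw [hυ, hυ, ← hsq, dotProduct_mul_self_mulVec_inv_mulVec
      (isHermitian_iff_isSymm.mp hΓhalf.isHermitian) hΓhalf.isUnit, htυ]
  have hθint : ∀ j, Integrable (fun ξ => θ j ξ * θ j ξ) μ := fun j => by
    simpa only [hθ] using integrable_dotProduct_mul_dotProduct hint (θhat j) (θhat j)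
  have hθnorm : ∀ j, ∫ ξ, θ j ξ * θ j ξ ∂μ = 1 := fun j => by
    simp only [hθ, integral_dotProduct_mul_dotProduct hint horth, hθhat, if_true]
  have hexpand : ∀ (S : Finset (Fin (min P r))) ξ,
      (fun i => ∑ j ∈ S, σ j * υ j i * θ j ξ) = ∑ j ∈ S, (σ j * θ j ξ) • υ j :=
    fun S ξ => funext fun i => by
      simp only [Finset.sum_apply, Pi.smul_apply, smul_eq_mul]
      exact Finset.sum_congr rfl fun j _ => by ring
  have htail : ∀ ξ, yp ξ - yd ξ =
      ∑ j ∈ Finset.univ.filter (fun j : Fin (min P r) => d ≤ (j : ℕ)), (σ j * θ j ξ) • υ j :=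
    fun ξ => by
      rw [← hexpand]
      funext i
      rw [Pi.sub_apply, hyp, hyd, add_sub_add_left_eq_sub, ← Finset.sum_filter_add_sum_filter_not
        Finset.univ (fun j : Fin (min P r) => (j : ℕ) < d)]
      simp only [not_lt, add_sub_cancel_left]
  have hfull : ∀ ξ, yp ξ - yhat0 = ∑ j, (σ j * θ j ξ) • υ j := fun ξ => by
    rw [← hexpand]
    funext i
    rw [Pi.sub_apply, hyp, add_sub_cancel_left]
  simp only [htail, hfull, integral_sum_smul_dotProduct_mulVec_sum_smul hυorth hθint hθnorm]
  exact hcrit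

/-- Theorem 1 of the paper: if the reduced dimension d satisfies the
singular-value tail criterion with tolerance ε, then the relative Γ-weighted
mean-square truncation error is bounded by ε. -/
theorem stmt_3 {P r : ℕ} {Ξ : Type*} [MeasurableSpace Ξ]
    (μ : Measure Ξ) [IsProbabilityMeasure μ]
    (ψ : Ξ → Fin P → ℝ)
    (hint : ∀ j k, Integrable (fun ξ => ψ ξ j * ψ ξ k) μ)
    (horth : ∀ j k, ∫ ξ, ψ ξ j * ψ ξ k ∂μ = if j = k then (1 : ℝ) else 0)
    (Γ Γhalf : Matrix (Fin r) (Fin r) ℝ)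
    (hΓ : Γ.PosDef) (hΓhalf : Γhalf.PosDef) (hsq : Γhalf * Γhalf = Γ)
    (σ : Fin (min P r) → ℝ) (hσ : ∀ j, 0 ≤ σ j) (hord : ∀ j k, j ≤ k → σ k ≤ σ j)
    (tυ : Fin (min P r) → Fin r → ℝ)
    (htυ : ∀ j k, dotProduct (tυ j) (tυ k) = if j = k then (1 : ℝ) else 0)
    (υ : Fin (min P r) → Fin r → ℝ) (hυ : ∀ j, υ j = Γhalf⁻¹.mulVec (tυ j))
    (θhat : Fin (min P r) → Fin P → ℝ)
    (hθhat : ∀ j k, dotProduct (θhat j) (θhat k) = if j = k then (1 : ℝ) else 0)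
    (θ : Fin (min P r) → Ξ → ℝ) (hθ : ∀ j ξ, θ j ξ = dotProduct (θhat j) (ψ ξ))
    (yhat0 : Fin r → ℝ) (d : ℕ)
    (yp yd : Ξ → Fin r → ℝ)
    (hyp : ∀ ξ i, yp ξ i = yhat0 i + ∑ j, σ j * υ j i * θ j ξ)
    (hyd : ∀ ξ i, yd ξ i =
      yhat0 i + ∑ j ∈ Finset.univ.filter (fun j : Fin (min P r) => (j : ℕ) < d),
        σ j * υ j i * θ j ξ)
    (ε : ℝ) (hε : 0 < ε)
    (hcrit : Real.sqrt (∑ j ∈ Finset.univ.filter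
        (fun j : Fin (min P r) => d ≤ (j : ℕ)), σ j ^ 2) ≤
      ε * Real.sqrt (∑ j, σ j ^ 2)) :
    Real.sqrt (∫ ξ, dotProduct (yp ξ - yd ξ) (Γ.mulVec (yp ξ - yd ξ)) ∂μ) ≤
      ε * Real.sqrt (∫ ξ, dotProduct (yp ξ - yhat0) (Γ.mulVec (yp ξ - yhat0)) ∂μ) :=
  stmt_3_general μ ψ hint horth Γ Γhalf hΓhalf hsq σ tυ htυ υ hυ θhat hθhat θ hθ yhat0 d yp yd hyp
    hyd ε hcrit
end

section
/- Let μ be a probability density on Ξ ⊆ ℝ^s and let p ≥ 0. Then there exist Q points ξ^{(1)},...,ξ^{(Q)} ∈ Ξ and weights w_1,...,w_Q ≥ 0 with Q ≤ dim of the space of polynomials of degree ≤ 2p in s variables, such that ∫_Ξ q(ξ) μ(ξ) dξ = Σ_{j=1}^Q w_j q(ξ^{(j)}) for every polynomial q of total degree ≤ 2p. -/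
/-!
Let `f` send a point to the vector of its monomials of degree at most `2p`. Since `μ` is a
probability measure carried by the compact set `Ξ`, the moment vector `∫ f dμ` lies in the closed
convex set `convexHull (f '' Ξ)` (closed because `f '' Ξ` is compact and the space is
finite-dimensional). Carathéodory's theorem writes it as a positive convex combination of
affinely independent points `f ξⱼ`; these lie in the hyperplane where the constant monomial
equals `1`, so there are at most as many of them as there are monomials, i.e. at most
`binom(2p + s, s)`. Every polynomial of degree at most `2p` is a linear functional of `f`, which
turns the identity `∫ f dμ = ∑ wⱼ f ξⱼ` into the quadrature rule.
-/

open MeasureTheory Module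

section ConvexHull

variable {𝕜 E : Type*} [Field 𝕜] [LinearOrder 𝕜] [IsStrictOrderedRing 𝕜]
  [AddCommGroup E] [Module 𝕜 E] [FiniteDimensional 𝕜 E]

theorem exists_fin_convex_combination_of_mem_convexHull {s : Set E} {x : E}
    (hx : x ∈ convexHull 𝕜 s) :
    ∃ Q ≤ finrank 𝕜 (vectorSpan 𝕜 s) + 1, ∃ (z : Fin Q → E) (w : Fin Q → 𝕜),
      (∀ j, z j ∈ s) ∧ (∀ j, 0 < w j) ∧ ∑ j, w j = 1 ∧ ∑ j, w j • z j = x := by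
  obtain ⟨ι, _, z, w, hzs, hz, hw, hw₁, hwz⟩ := eq_pos_convex_span_of_mem_convexHull hx
  have hcard : Fintype.card ι ≤ finrank 𝕜 (vectorSpan 𝕜 s) + 1 :=
    hz.card_le_finrank_succ.trans
      (Nat.add_le_add_right (Submodule.finrank_mono (vectorSpan_mono 𝕜 hzs)) 1)
  let e := (Fintype.equivFin ι).symm
  refine ⟨_, hcard, z ∘ e, w ∘ e, fun j => hzs ⟨_, rfl⟩, fun j => hw _, ?_, ?_⟩
  · rw [← hw₁]; exact e.sum_comp w
  · rw [← hwz]; exact e.sum_comp fun i => w i • z i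

theorem finrank_vectorSpan_lt_of_forall_eq_one {s : Set E} (hs : s.Nonempty)
    {φ : Dual 𝕜 E} (hφ : ∀ z ∈ s, φ z = 1) :
    finrank 𝕜 (vectorSpan 𝕜 s) < finrank 𝕜 E := by
  obtain ⟨z₀, hz₀⟩ := hs
  have hspan : vectorSpan 𝕜 s ≤ LinearMap.ker φ := by
    rw [vectorSpan_def, Submodule.span_le]
    rintro _ ⟨a, ha, b, hb, rfl⟩
    simp [hφ a ha, hφ b hb]
  have hker : LinearMap.ker φ ≠ ⊤ := fun h => by
    simpa [LinearMap.ker_eq_top.mp h] using hφ z₀ hz₀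
  exact (Submodule.finrank_mono hspan).trans_lt (Submodule.finrank_lt hker)

end ConvexHull

theorem IsCompact.convexHull {E : Type*} [AddCommGroup E] [Module ℝ E] [TopologicalSpace E]
    [ContinuousAdd E] [ContinuousSMul ℝ E] [FiniteDimensional ℝ E] {K : Set E}
    (hK : IsCompact K) : IsCompact (_root_.convexHull ℝ K) := by
  let combine (k : ℕ) (wz : (Fin k → ℝ) × (Fin k → E)) : E := ∑ i, wz.1 i • wz.2 i
  have hunion : _root_.convexHull ℝ K = ⋃ k ∈ Set.Iic (finrank ℝ E + 1),
      combine k '' (stdSimplex ℝ (Fin k) ×ˢ Set.univ.pi fun _ => K) := by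
    refine subset_antisymm (fun x hx => ?_) (Set.iUnion₂_subset fun k _ => ?_)
    · obtain ⟨Q, hQ, z, w, hz, hw, hw₁, hwz⟩ := exists_fin_convex_combination_of_mem_convexHull hx
      refine Set.mem_biUnion (x := Q) ?_ ⟨(w, z), ⟨⟨fun j => (hw j).le, hw₁⟩, fun j _ => hz j⟩, hwz⟩
      exact hQ.trans (Nat.add_le_add_right (vectorSpan ℝ K).finrank_le 1)
    · rintro _ ⟨⟨w, z⟩, ⟨⟨hw, hw₁⟩, hz⟩, rfl⟩
      exact (convex_convexHull ℝ K).sum_mem (fun i _ => hw i) hw₁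
        fun i _ => subset_convexHull ℝ K (hz i trivial)
  rw [hunion]
  refine (Set.finite_Iic _).isCompact_biUnion fun k _ => ((isCompact_stdSimplex ℝ _).prod
    (isCompact_univ_pi fun _ => hK)).image ?_
  fun_prop

section Quadrature

variable {X E : Type*} [TopologicalSpace X] [MeasurableSpace X] [OpensMeasurableSpace X]
  [NormedAddCommGroup E] [NormedSpace ℝ E] [FiniteDimensional ℝ E]
  {μ : Measure X} {K : Set X} {f : X → E}

theorem Continuous.integrable_of_measure_compl_eq_zero [IsFiniteMeasure μ] (hf : Continuous f)
    (hK : IsCompact K) (hμK : μ Kᶜ = 0) : Integrable f μ := by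
  obtain ⟨C, hC⟩ := hK.exists_bound_of_continuousOn hf.continuousOn
  exact .of_bound hf.aestronglyMeasurable C (ae_iff.mpr hμK |>.mono hC)

theorem integral_mem_convexHull_image [IsProbabilityMeasure μ] (hK : IsCompact K)
    (hμK : μ Kᶜ = 0) (hf : Continuous f) : ∫ x, f x ∂μ ∈ convexHull ℝ (f '' K) :=
  (convex_convexHull ℝ _).integral_mem (hK.image hf).convexHull.isClosed
    (ae_iff.mpr hμK |>.mono fun x hx => subset_convexHull ℝ _ ⟨x, hx, rfl⟩)
    (hf.integrable_of_measure_compl_eq_zero hK hμK)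

theorem exists_quadrature_of_forall_eq_one [IsProbabilityMeasure μ] (hK : IsCompact K)
    (hμK : μ Kᶜ = 0) (hf : Continuous f) {φ : Dual ℝ E} (hφ : ∀ x ∈ K, φ (f x) = 1) :
    ∃ Q ≤ finrank ℝ E, ∃ (pts : Fin Q → X) (w : Fin Q → ℝ), (∀ j, pts j ∈ K) ∧ (∀ j, 0 < w j) ∧
      ∀ L : Dual ℝ E, ∫ x, L (f x) ∂μ = ∑ j, w j * L (f (pts j)) := by
  have hmem := integral_mem_convexHull_image hK hμK hf
  have hφ' : ∀ z ∈ f '' K, φ z = 1 := by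
    rintro _ ⟨x, hx, rfl⟩
    exact hφ x hx
  obtain ⟨Q, hQ, z, w, hz, hw, -, hwz⟩ := exists_fin_convex_combination_of_mem_convexHull hmem
  choose pts hpts hfpts using hz
  have hQ' := hQ.trans (finrank_vectorSpan_lt_of_forall_eq_one
    (convexHull_nonempty_iff.mp ⟨_, hmem⟩) hφ')
  refine ⟨Q, hQ', pts, w, hpts, hw, fun L => ?_⟩
  calc ∫ x, L (f x) ∂μ = L (∫ x, f x ∂μ) :=
        L.toContinuousLinearMap.integral_comp_comm (hf.integrable_of_measure_compl_eq_zero hK hμK)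
    _ = ∑ j, w j * L (f (pts j)) := by simp [← hwz, hfpts]

end Quadrature

theorem Finsupp.card_le_choose_of_degree_le {s n : ℕ} {D : Finset (Fin s →₀ ℕ)}
    (hD : ∀ d ∈ D, d.degree ≤ n) : D.card ≤ (n + s).choose s := by
  classical
  let homogenize (d : Fin s →₀ ℕ) : Fin (s + 1) →₀ ℕ := Finsupp.cons (n - d.degree) d
  have hmaps : Set.MapsTo homogenize D
      (Finset.univ.finsuppAntidiag n : Finset (Fin (s + 1) →₀ ℕ)) := fun d hd => by
    rw [Finset.mem_coe, Finset.mem_finsuppAntidiag, Fin.sum_univ_succ]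
    simp only [homogenize, Finsupp.cons_zero, Finsupp.cons_succ, ← Finsupp.degree_eq_sum]
    exact ⟨Nat.sub_add_cancel (hD d hd), Finset.subset_univ _⟩
  have hinj : Set.InjOn homogenize D := fun d _ e _ hde => by
    simpa [homogenize] using congrArg Finsupp.tail hde
  calc D.card ≤ (Finset.univ.finsuppAntidiag n).card := Finset.card_le_card_of_injOn _ hmaps hinj
    _ = (n + s).choose s := by
      rw [Finset.card_finsuppAntidiag_nat_eq_choose, Finset.card_univ, Fintype.card_fin,
        add_right_comm, add_tsub_cancel_right, add_comm n s, Nat.choose_symm_add]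

namespace MvPolynomial

variable {σ R : Type*} [Fintype σ] [CommSemiring R]

def monomialVector (D : Finset (σ →₀ ℕ)) (x : σ → R) : D → R :=
  fun d => ∏ i, x i ^ (d : σ →₀ ℕ) i

theorem continuous_monomialVector [TopologicalSpace R] [IsTopologicalSemiring R]
    (D : Finset (σ →₀ ℕ)) : Continuous (monomialVector (R := R) D) :=
  continuous_pi fun _ => continuous_finsetProd _ fun i _ => (continuous_apply i).pow _

theorem eval_eq_sum_coeff_mul_monomialVector {D : Finset (σ →₀ ℕ)} {q : MvPolynomial σ R}
    (hq : q.support ⊆ D) (x : σ → R) :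
    eval x q = ∑ d : D, coeff d q * monomialVector D x d := by
  rw [eval_eq', Finset.sum_subset hq fun d _ hd => by simp [notMem_support_iff.mp hd]]
  exact (Finset.sum_coe_sort D _).symm

end MvPolynomial

open MvPolynomial

/-- Tchakaloff: for a probability measure supported on a compact set
Ξ ⊆ ℝ^s, there is a positive quadrature rule with at most binom(2p+s, s) nodes in Ξ
that is exact for all polynomials of total degree ≤ 2p. -/
theorem stmt_9 {s : ℕ} (Ξ : Set (Fin s → ℝ)) (hΞ : IsCompact Ξ)
    (μ : Measure (Fin s → ℝ)) [IsProbabilityMeasure μ] (hsupp : μ Ξᶜ = 0)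
    (p : ℕ) :
    ∃ (Q : ℕ), Q ≤ Nat.choose (2 * p + s) s ∧
      ∃ (pts : Fin Q → (Fin s → ℝ)) (w : Fin Q → ℝ),
        (∀ j, pts j ∈ Ξ) ∧ (∀ j, 0 ≤ w j) ∧
        ∀ q : MvPolynomial (Fin s) ℝ, q.totalDegree ≤ 2 * p →
          ∫ x, MvPolynomial.eval x q ∂μ = ∑ j, w j * MvPolynomial.eval (pts j) q := by
  let D := (Finsupp.finite_of_degree_le (σ := Fin s) (2 * p)).toFinset
  have h0 : (0 : Fin s →₀ ℕ) ∈ D := by simp [D]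
  obtain ⟨Q, hQ, pts, w, hpts, hw, hquad⟩ := exists_quadrature_of_forall_eq_one hΞ hsupp
    (continuous_monomialVector D) (φ := LinearMap.proj ⟨0, h0⟩)
    fun x _ => by simp [monomialVector]
  have hcard : finrank ℝ (D → ℝ) ≤ (2 * p + s).choose s := by
    rw [finrank_fintype_fun_eq_card, Fintype.card_coe]
    exact Finsupp.card_le_choose_of_degree_le fun d hd => by simpa [D] using hd
  refine ⟨Q, hQ.trans hcard, pts, w, hpts, fun j => (hw j).le, fun q hq => ?_⟩
  have hqD : q.support ⊆ D := fun d hd => by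
    simpa [D, Finsupp.degree_apply, Finsupp.sum] using (le_totalDegree hd).trans hq
  let L : Dual ℝ (D → ℝ) := ∑ d : D, q.coeff d • LinearMap.proj d
  have hL : ∀ x, L (monomialVector D x) = eval x q := fun x => by
    simp [L, eval_eq_sum_coeff_mul_monomialVector hqD]
  simpa only [hL] using hquad L
end
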